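/- Suppose y⁴ − 6xy² + 4x(x+1)y − 3x² = 0 and define T = (y³ − 3xy + x(x+1))/(x(x−1)) (assuming x(x−1) ≠ 0). Then x = (T+1)(T−3)³/((T−1)(T+3)³) and y = −3(T−3)(T+1)/(T+3)², provided (T−1)(T+3) ≠ 0. -/

import Mathlib

/-!
Writing `T = N / D`, two binary quadratic forms in `(N, D)` with coefficients in `ℤ[x, y]` are
multiples of the curve equation; dividing by `D²` gives two quadratic equations for `T` over
`ℤ[x, y]`. One of them is linear in `y` and reads `y(T+3)² = -3(T-3)(T+1)`; eliminating `y`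
between the two leaves an equation linear in `x`, namely `x(T-1)(T+3)³ = (T+1)(T-3)³`.
-/

theorem quadratic_eq_zero_of_homogeneous_eq_zero {K : Type*} [Field K] {a b c N D T : K}
    (hD : D ≠ 0) (hT : T = N / D) (h : a * N ^ 2 + b * N * D + c * D ^ 2 = 0) :
    a * T ^ 2 + b * T + c = 0 := by
  have hN : N = T * D := by rw [hT, div_mul_cancel₀ _ hD]
  rw [hN] at h
  have h' : (a * T ^ 2 + b * T + c) * D ^ 2 = 0 := by linear_combination h
  exact (mul_eq_zero.mp h').resolve_right (pow_ne_zero 2 hD)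

section PicardCurve

variable {R : Type*} [CommRing R] {x y : R}

theorem picard_homogeneous_relation_x
    (hcurve : y ^ 4 - 6 * x * y ^ 2 + 4 * x * (x + 1) * y - 3 * x ^ 2 = 0) :
    (1 - x) * (y ^ 3 - 3 * x * y + x * (x + 1)) ^ 2
      + 2 * (2 * y - 1 - x) * (y ^ 3 - 3 * x * y + x * (x + 1)) * (x * (x - 1))
      + -3 * (1 - x) * (x * (x - 1)) ^ 2 = 0 := by
  linear_combination (1 - x) * (y ^ 2 - 4 * x) * hcurve

theorem picard_homogeneous_relation_y
    (hcurve : y ^ 4 - 6 * x * y ^ 2 + 4 * x * (x + 1) * y - 3 * x ^ 2 = 0) :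
    (y + 3) * (y ^ 3 - 3 * x * y + x * (x + 1)) ^ 2
      + 6 * (y - 1) * (y ^ 3 - 3 * x * y + x * (x + 1)) * (x * (x - 1))
      + 9 * (y - 1) * (x * (x - 1)) ^ 2 = 0 := by
  linear_combination (y ^ 3 + 3 * y ^ 2 + 4 * x ^ 2 - 8 * x) * hcurve

end PicardCurve

theorem picard_level3_parametrization (x y T : ℂ)
    (hcurve : y ^ 4 - 6 * x * y ^ 2 + 4 * x * (x + 1) * y - 3 * x ^ 2 = 0)
    (hx : x * (x - 1) ≠ 0)
    (hT : T = (y ^ 3 - 3 * x * y + x * (x + 1)) / (x * (x - 1)))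
    (hden : (T - 1) * (T + 3) ≠ 0) :
    x = (T + 1) * (T - 3) ^ 3 / ((T - 1) * (T + 3) ^ 3)
      ∧ y = -3 * (T - 3) * (T + 1) / (T + 3) ^ 2 := by
  have hQx := quadratic_eq_zero_of_homogeneous_eq_zero hx hT (picard_homogeneous_relation_x hcurve)
  have hQy := quadratic_eq_zero_of_homogeneous_eq_zero hx hT (picard_homogeneous_relation_y hcurve)
  have hT1 : T - 1 ≠ 0 := left_ne_zero_of_mul hden
  have hT3 : T + 3 ≠ 0 := right_ne_zero_of_mul hden
  constructor
  · rw [eq_div_iff (mul_ne_zero hT1 (pow_ne_zero 3 hT3))]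
    linear_combination 4 * T * hQy - (T + 3) ^ 2 * hQx
  · rw [eq_div_iff (pow_ne_zero 2 hT3)]
    linear_combination hQy
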